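/- Let L₂ be the 3-dimensional complex ω-Lie algebra with basis {x,y,z}, brackets [x,y]=0, [x,z]=y, [y,z]=z, and ω(x,z)=1, ω(x,y)=ω(y,z)=0. Then a linear map f on L₂ is a quasiderivation of L₂ if and only if its matrix in the basis {x,y,z} has third row (0, 0, x₃₃), i.e., the (3,1) and (3,2) entries vanish. In particular, QDer(L₂) is a 7-dimensional subspace of gl(L₂). -/

import Mathlib

/-- Bracket of the ω-Lie algebra `L₂`: basis `x = e 0, y = e 1, z = e 2`,
`[x,y] = 0`, `[x,z] = y`, `[y,z] = z`, extended bilinearly. -/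
def br2 (u v : Fin 3 → ℂ) : Fin 3 → ℂ :=
  ![0, u 0 * v 2 - u 2 * v 0, u 1 * v 2 - u 2 * v 1]

/-- The form ω of `L₂`: `ω(x,z) = 1`, `ω(x,y) = ω(y,z) = 0`, skew-symmetric bilinear. -/
def om2 (u v : Fin 3 → ℂ) : ℂ := u 0 * v 2 - u 2 * v 0

/-- `f` (as a matrix in the basis `x,y,z`) is a quasiderivation of `L₂`. -/
def IsQDer2 (f : Matrix (Fin 3) (Fin 3) ℂ) : Prop :=
  ∃ f' : Matrix (Fin 3) (Fin 3) ℂ, ∀ u v : Fin 3 → ℂ,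
    br2 (f.mulVec u) v + br2 u (f.mulVec v) = f'.mulVec (br2 u v)

/-
Since `[x,y] = 0`, a quasiderivation satisfies `[f x, y] + [x, f y] = 0`, and this vector is
`(0, f 2 1, -f 2 0)`. Conversely, when these entries vanish, `f` preserves `span{y,z}`, which
contains the derived algebra, and `f'` can be taken to act on `y = [x,z]` and `z = [y,z]` as the
Leibniz rule dictates and to kill `x`. The quasiderivations therefore form the kernel of the
surjection `f ↦ (f 2 0, f 2 1)` on the 9-dimensional space of matrices.
-/

open Matrix

theorem finrank_ker_entryLinearMap_prod {K m n : Type*} [Field K] [Fintype m] [Fintype n]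
    [DecidableEq m] [DecidableEq n] {i k : m} {j l : n} (h : (i, j) ≠ (k, l)) :
    Module.finrank K (LinearMap.ker ((entryLinearMap K K i j).prod (entryLinearMap K K k l))) =
      Fintype.card m * Fintype.card n - 2 := by
  set φ := (entryLinearMap K K i j).prod (entryLinearMap K K k l)
  have hsurj : Function.Surjective φ := by
    rintro ⟨a, b⟩
    have h' : (k, l) ≠ (i, j) := h.symm
    exact ⟨single i j a + single k l b, by simp_all [φ]⟩
  have hrank := φ.finrank_range_add_finrank_ker
  rw [LinearMap.range_eq_top.mpr hsurj, finrank_top, Module.finrank_matrix,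
    Module.finrank_prod, Module.finrank_self] at hrank
  omega

theorem IsQDer2.entries_eq_zero {f : Matrix (Fin 3) (Fin 3) ℂ} (hf : IsQDer2 f) :
    f 2 0 = 0 ∧ f 2 1 = 0 := by
  obtain ⟨f', hf'⟩ := hf
  have hxy := hf' ![1, 0, 0] ![0, 1, 0]
  exact ⟨by simpa [br2, mulVec, dotProduct, Fin.sum_univ_succ] using congrFun hxy 2,
    by simpa [br2, mulVec, dotProduct, Fin.sum_univ_succ] using congrFun hxy 1⟩

theorem isQDer2_of_entries_eq_zero {f : Matrix (Fin 3) (Fin 3) ℂ} (h0 : f 2 0 = 0)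
    (h1 : f 2 1 = 0) : IsQDer2 f := by
  refine ⟨!![0, 0, 0; 0, f 0 0 + f 2 2, f 0 1; 0, f 1 0, f 1 1 + f 2 2], fun u v => ?_⟩
  funext i
  fin_cases i <;> simp [br2, mulVec, dotProduct, Fin.sum_univ_succ, h0, h1] <;> ring

theorem isQDer2_iff (f : Matrix (Fin 3) (Fin 3) ℂ) : IsQDer2 f ↔ f 2 0 = 0 ∧ f 2 1 = 0 :=
  ⟨IsQDer2.entries_eq_zero, fun h => isQDer2_of_entries_eq_zero h.1 h.2⟩

theorem stmt16 :
    (∀ f : Matrix (Fin 3) (Fin 3) ℂ, IsQDer2 f ↔ (f 2 0 = 0 ∧ f 2 1 = 0)) ∧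
    (∃ S : Submodule ℂ (Matrix (Fin 3) (Fin 3) ℂ),
      (S : Set (Matrix (Fin 3) (Fin 3) ℂ)) = {f | IsQDer2 f} ∧ Module.finrank ℂ S = 7) := by
  refine ⟨isQDer2_iff, LinearMap.ker ((entryLinearMap ℂ ℂ 2 0).prod (entryLinearMap ℂ ℂ 2 1)),
    ?_, ?_⟩
  · ext f
    simp [isQDer2_iff]
  · rw [finrank_ker_entryLinearMap_prod (by decide)]
    simp
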